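/- arXiv:2601.20536 — 3 statements merged into one kernel-verified Lean document; each statement's English description precedes it below -/
import Mathlib

section
/- For the classical p-typical Witt vectors of a commutative ring R, the map sending x to V⟨x^p⟩ - p·⟨x⟩ is additive, i.e. for all x, y ∈ R, V⟨(x+y)^p⟩ - p⟨x+y⟩ = (V⟨x^p⟩ - p⟨x⟩) + (V⟨y^p⟩ - p⟨y⟩) in W(R). -/
open WittVector MvPolynomial

private lemma witt_expr_map (p : ℕ) [Fact p.Prime] {R S : Type*} [CommRing R] [CommRing S]
    (f : R →+* S) (x : R) :
    WittVector.map f (WittVector.verschiebung (WittVector.teichmuller p (x ^ p)) -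
        p • WittVector.teichmuller p x) =
      WittVector.verschiebung (WittVector.teichmuller p (f x ^ p)) -
        p • WittVector.teichmuller p (f x) := by
  rw [map_sub, map_nsmul, WittVector.map_verschiebung, WittVector.map_teichmuller,
    WittVector.map_teichmuller, map_pow]

private lemma witt_aux₁ (p : ℕ) [Fact p.Prime] {S : Type*} (x y : MvPolynomial S ℚ) :
    WittVector.verschiebung (WittVector.teichmuller p ((x + y) ^ p)) -
        p • WittVector.teichmuller p (x + y) =
      (WittVector.verschiebung (WittVector.teichmuller p (x ^ p)) -
          p • WittVector.teichmuller p x) +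
        (WittVector.verschiebung (WittVector.teichmuller p (y ^ p)) -
          p • WittVector.teichmuller p y) := by
  apply (WittVector.ghostMap.bijective_of_invertible p (MvPolynomial S ℚ)).1
  simp only [map_sub, map_add, map_nsmul]
  funext n
  simp only [Pi.add_apply, Pi.sub_apply, Pi.smul_apply, WittVector.ghostMap_apply]
  cases n with
  | zero =>
    simp only [WittVector.ghostComponent_zero_verschiebung,
      WittVector.ghostComponent_teichmuller, pow_zero, pow_one]
    ring
  | succ n =>
    simp only [WittVector.ghostComponent_verschiebung,
      WittVector.ghostComponent_teichmuller, ← pow_mul, ← pow_succ']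
    ring

private lemma witt_aux₂ (p : ℕ) [Fact p.Prime] {S : Type*} (x y : MvPolynomial S ℤ) :
    WittVector.verschiebung (WittVector.teichmuller p ((x + y) ^ p)) -
        p • WittVector.teichmuller p (x + y) =
      (WittVector.verschiebung (WittVector.teichmuller p (x ^ p)) -
          p • WittVector.teichmuller p x) +
        (WittVector.verschiebung (WittVector.teichmuller p (y ^ p)) -
          p • WittVector.teichmuller p y) := by
  refine WittVector.map_injective (MvPolynomial.map (Int.castRingHom ℚ))
    (MvPolynomial.map_injective _ Int.cast_injective) ?_
  rw [witt_expr_map, map_add (WittVector.map _), witt_expr_map, witt_expr_map,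
    map_add (MvPolynomial.map (Int.castRingHom ℚ))]
  exact witt_aux₁ p _ _

/-- For the classical `p`-typical Witt vectors of a commutative ring `R`, the map
`x ↦ V⟨x^p⟩ - p⟨x⟩` is additive. -/
theorem witt_V_teich_sub_p_teich_additive (p : ℕ) [Fact p.Prime]
    (R : Type*) [CommRing R] (x y : R) :
    WittVector.verschiebung (WittVector.teichmuller p ((x + y) ^ p)) -
        p • WittVector.teichmuller p (x + y) =
      (WittVector.verschiebung (WittVector.teichmuller p (x ^ p)) -
          p • WittVector.teichmuller p x) +
        (WittVector.verschiebung (WittVector.teichmuller p (y ^ p)) -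
          p • WittVector.teichmuller p y) := by
  rcases MvPolynomial.counit_surjective R x with ⟨x, rfl⟩
  rcases MvPolynomial.counit_surjective R y with ⟨y, rfl⟩
  rw [← map_add (MvPolynomial.counit R), ← witt_expr_map, ← witt_expr_map, ← witt_expr_map,
    ← map_add (WittVector.map _)]
  exact congrArg _ (witt_aux₂ p x y)
end

section
/- If R is a p-torsion free commutative ring, then the ring W(R) of p-typical Witt vectors of R is p-torsion free. -/
/-!
Invert `p`: torsion-freeness makes `R → R[1/p]` injective, so `W(R) → W(R[1/p])` is injective
too. Over `R[1/p]` the ghost map is a ring isomorphism onto `R[1/p]^ℕ`, in which `p` is a unit;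
hence multiplication by `p` is injective on `W(R[1/p])` and therefore on `W(R)`.
-/

open Function

theorem WittVector.isUnit_natCast_of_invertible {p : ℕ} [Fact p.Prime] {A : Type*} [CommRing A]
    [Invertible (p : A)] {n : ℕ} (hn : IsUnit (n : A)) : IsUnit (n : WittVector p A) := by
  have h := (hn.map (Pi.constRingHom ℕ A)).map (WittVector.ghostEquiv p A).symm
  rwa [map_natCast, map_natCast] at h

theorem eq_zero_of_nsmul_eq_zero_of_injective {S T : Type*} [Semiring S] [Semiring T]
    {f : S →+* T} (hf : Injective f) {n : ℕ} (hn : IsUnit (n : T)) {s : S} (h : n • s = 0) :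
    s = 0 := by
  apply hf
  rw [map_zero, ← hn.mul_right_eq_zero, ← nsmul_eq_mul, ← map_nsmul, h, map_zero]

theorem natCast_mem_nonZeroDivisors_of_nsmul {R : Type*} [CommRing R] {n : ℕ}
    (h : ∀ r : R, n • r = 0 → r = 0) : (n : R) ∈ nonZeroDivisors R :=
  mem_nonZeroDivisors_iff_right.mpr fun r hr => h r (by rwa [nsmul_eq_mul'])

/-- If `R` is `p`-torsion free then `W(R)` is `p`-torsion free. -/
theorem wittVector_p_torsion_free (p : ℕ) [Fact p.Prime]
    (R : Type*) [CommRing R] (hR : ∀ r : R, p • r = 0 → r = 0) :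
    ∀ x : WittVector p R, p • x = 0 → x = 0 := by
  intro x hx
  let A := Localization.Away (p : R)
  have hpA : IsUnit (p : A) := by
    simpa using IsLocalization.Away.algebraMap_isUnit (S := A) (p : R)
  have : Invertible (p : A) := hpA.invertible
  have hinj : Injective (algebraMap R A) :=
    IsLocalization.injective A (Submonoid.powers_le.mpr (natCast_mem_nonZeroDivisors_of_nsmul hR))
  exact eq_zero_of_nsmul_eq_zero_of_injective (WittVector.map_injective _ hinj)
    (WittVector.isUnit_natCast_of_invertible hpA) hx
end

section
/- Let p be a prime. For the free commutative polynomial ring A = ℤ[X,Y] and distinct nonzero polynomials f₁, ..., f_r ∈ A with f_i ≠ -f_j for all i ≠ j, and p odd: the ghost sequences (f_i, f_i^p, f_i^{p²}, ...) for i = 1,...,r are ℤ-linearly independent in A^ℕ. (Special case r = 2: if f, g are nonzero with f ≠ g and f ≠ -g, then m(f, f^p, ...) + n(g, g^p, ...) = 0 implies m = n = 0.) -/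
/-- The Teichmüller sequence `⟨f⟩ = (f, f^p, f^{p²}, …)` in `A^ℕ`. -/
def tei (p : ℕ) {A : Type*} [Ring A] (r : A) : ℕ → A := fun k => r ^ p ^ k

/-- In `A = ℤ[X,Y]`, for an odd prime `p` and nonzero `f, g` with `f ≠ g` and `f ≠ -g`,
the Teichmüller sequences `⟨f⟩, ⟨g⟩` are `ℤ`-linearly independent in `A^ℕ`. -/
theorem tei_linearIndependent_mvPolynomial (p : ℕ) (hp : p.Prime) (hodd : Odd p)
    (f g : MvPolynomial (Fin 2) ℤ) (hf : f ≠ 0) (hg : g ≠ 0)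
    (hfg : f ≠ g) (hfg' : f ≠ -g) :
    ∀ m n : ℤ, m • tei p f + n • tei p g = 0 → m = 0 ∧ n = 0 := by
  intro m n H
  have h0 : m • f + n • g = 0 := by
    have := congrFun H 0
    simpa [tei] using this
  have h1 : m • f ^ p + n • g ^ p = 0 := by
    have := congrFun H 1
    simpa [tei] using this
  by_cases hm : m = 0
  · subst hm
    refine ⟨rfl, ?_⟩
    simp only [zero_smul, zero_add, smul_eq_zero] at h0
    exact h0.resolve_right hg
  by_cases hn : n = 0
  · subst hn
    refine ⟨?_, rfl⟩
    simp only [zero_smul, add_zero, smul_eq_zero] at h0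
    exact h0.resolve_right hf
  exfalso
  have hp1 : p - 1 + 1 = p := Nat.succ_pred_eq_of_pos hp.pos
  have e1 : m • f = -(n • g) := eq_neg_of_add_eq_zero_left h0
  have e2 : m • f ^ p = -(n • g ^ p) := eq_neg_of_add_eq_zero_left h1
  have e3 : (m ^ p) • f ^ p = -((n ^ p) • g ^ p) := by
    have h6 := congrArg (· ^ p) e1
    simp only [hodd.neg_pow, smul_pow] at h6
    exact h6
  have e5 : (m ^ p) • f ^ p = -((m ^ (p - 1) * n) • g ^ p) := by
    calc (m ^ p) • f ^ p = m ^ (p - 1) • (m • f ^ p) := by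
          rw [smul_smul, ← pow_succ, hp1]
      _ = -((m ^ (p - 1) * n) • g ^ p) := by rw [e2, smul_neg, smul_smul]
  have key : (n ^ p) • g ^ p = (m ^ (p - 1) * n) • g ^ p :=
    neg_injective (e3.symm.trans e5)
  have hgp : (g : MvPolynomial (Fin 2) ℤ) ^ p ≠ 0 := pow_ne_zero _ hg
  have hcoef : n ^ p = m ^ (p - 1) * n := by
    have hsub : (n ^ p - m ^ (p - 1) * n) • g ^ p = 0 := by
      rw [sub_smul, key, sub_self]
    rcases smul_eq_zero.mp hsub with h | h
    · exact sub_eq_zero.mp h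
    · exact absurd h hgp
  have hpow : m ^ (p - 1) = n ^ (p - 1) := by
    have : n ^ (p - 1) * n = m ^ (p - 1) * n := by
      rw [← pow_succ, hp1, hcoef]
    exact (mul_right_cancel₀ hn this).symm
  have habs : m.natAbs = n.natAbs := by
    have h2 : m.natAbs ^ (p - 1) = n.natAbs ^ (p - 1) := by
      have := congrArg Int.natAbs hpow
      simpa [Int.natAbs_pow] using this
    exact Nat.pow_left_injective (by have := hp.two_le; omega) h2
  rcases Int.natAbs_eq_natAbs_iff.mp habs with hmn | hmn
  · apply hfg'
    rw [hmn] at h0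
    have h3 : n • f = n • (-g) := by
      rw [smul_neg]
      exact eq_neg_of_add_eq_zero_left h0
    exact smul_right_injective _ hn h3
  · apply hfg
    rw [hmn, neg_smul] at h0
    have h3 : n • f = n • g := neg_add_eq_zero.mp h0
    exact smul_right_injective _ hn h3
end
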